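/- arXiv:0706.0357 — 3 statements merged into one kernel-verified Lean document; each statement's English description precedes it below -/
import Mathlib

section
/- For complex numbers x₁, x₂ with Re(x₁) > 0 and Re(x₂) > 0, and positive real numbers m, n, one has (1/(m^{x₁} n^{x₂})) ∫_{-∞}^{∞} m^{-it} n^{it} Γ(x₁ + it) Γ(x₂ - it) dt = 2π Γ(x₁ + x₂) / (m+n)^{x₁+x₂}. -/
/-!
Write `n ^ (it) Γ(x₂ - it) = n ^ x₂ ∫₀^∞ u ^ (x₂ - it - 1) e^(-nu) du` and exchange the two
integrals; this is legitimate because `|Γ|` decays like `1 / t²` on vertical lines. For fixed `u`,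
the `t`-integral is Mellin inversion for the Gamma function:
`∫ (mu) ^ (-it) Γ(x₁ + it) dt = 2π (mu) ^ x₁ e^(-mu)`. What is left is the Gamma integral
`∫₀^∞ u ^ (x₁ + x₂ - 1) e^(-(m + n)u) du = Γ(x₁ + x₂) / (m + n) ^ (x₁ + x₂)`.
-/

open Complex Real
open MeasureTheory Set

lemma integrable_inv_sq_add_sq {a : ℝ} (ha : a ≠ 0) (b : ℝ) :
    Integrable fun t : ℝ => (a ^ 2 + (b + t) ^ 2)⁻¹ := by
  refine ((integrable_inv_one_add_sq.comp_div ha).comp_add_left b |>.const_mul (a ^ 2)⁻¹).congr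
    (.of_forall fun t => ?_)
  simp only
  field_simp

namespace Complex

lemma norm_Gamma_le_Gamma_re {s : ℂ} (hs : 0 < s.re) : ‖Gamma s‖ ≤ Real.Gamma s.re := by
  rw [Gamma_eq_integral hs, GammaIntegral, Real.Gamma_eq_integral hs]
  refine (norm_integral_le_integral_norm _).trans_eq <|
    setIntegral_congr_fun measurableSet_Ioi fun t ht => ?_
  simp [norm_cpow_eq_rpow_re_of_pos ht, Complex.norm_exp]

lemma norm_le_norm_add_one {s : ℂ} (hs : 0 ≤ s.re) : ‖s‖ ≤ ‖s + 1‖ := by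
  rw [← sq_le_sq₀ (norm_nonneg _) (norm_nonneg _), ← normSq_eq_norm_sq, ← normSq_eq_norm_sq,
    normSq_apply, normSq_apply]
  simp only [add_re, one_re, add_im, one_im, add_zero]
  nlinarith

-- From `Γ(s + 2) = s (s + 1) Γ(s)`: quadratic decay of `Γ` on vertical lines.
lemma norm_Gamma_le_div_normSq {s : ℂ} (hs : 0 < s.re) :
    ‖Gamma s‖ ≤ Real.Gamma (s.re + 2) / normSq s := by
  have hs0 : s ≠ 0 := by rintro rfl; simp at hs
  have hs1 : s + 1 ≠ 0 := fun h => by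
    have := congrArg re h
    simp only [add_re, one_re, zero_re] at this
    linarith
  have hrec : Gamma (s + 2) = (s + 1) * s * Gamma s := by
    rw [show s + 2 = s + 1 + 1 by ring, Gamma_add_one _ hs1, Gamma_add_one _ hs0, mul_assoc]
  have hnorm : normSq s ≤ ‖s + 1‖ * ‖s‖ := by
    rw [normSq_eq_norm_sq, sq]
    gcongr
    exact norm_le_norm_add_one hs.le
  rw [le_div_iff₀ (normSq_pos.mpr hs0)]
  calc ‖Gamma s‖ * normSq s ≤ ‖Gamma s‖ * (‖s + 1‖ * ‖s‖) := by gcongr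
    _ = ‖Gamma (s + 2)‖ := by rw [hrec]; simp only [norm_mul]; ring
    _ ≤ Real.Gamma (s.re + 2) := by
      simpa using norm_Gamma_le_Gamma_re (s := s + 2) (by simp only [add_re, re_ofNat]; linarith)

lemma continuous_Gamma_add_mul_I {z : ℂ} (hz : 0 < z.re) :
    Continuous fun t : ℝ => Gamma (z + t * I) := by
  refine continuous_iff_continuousAt.mpr fun t => ContinuousAt.comp (g := Gamma)
    (differentiableAt_Gamma _ fun k h => ?_).continuousAt (by fun_prop)
  have : z.re = -k := by simpa using congrArg re h
  linarith [(Nat.cast_nonneg k : (0 : ℝ) ≤ k)]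

lemma integrable_Gamma_add_mul_I {z : ℂ} (hz : 0 < z.re) :
    Integrable fun t : ℝ => Gamma (z + t * I) := by
  refine ((integrable_inv_sq_add_sq hz.ne' z.im).const_mul (Real.Gamma (z.re + 2))).mono'
    (continuous_Gamma_add_mul_I hz).aestronglyMeasurable (.of_forall fun t => ?_)
  have hre : (z + t * I).re = z.re := by simp
  have him : (z + t * I).im = z.im + t := by simp
  have := norm_Gamma_le_div_normSq (s := z + t * I) (by rwa [hre])
  rwa [hre, normSq_apply, hre, him, ← sq, ← sq, div_eq_mul_inv] at this

lemma mellin_cpow_mul_exp_neg (a : ℂ) {s : ℂ} (hs : 0 < (s + a).re) :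
    mellin (fun u : ℝ => (u : ℂ) ^ a * cexp (-u)) s = Gamma (s + a) := by
  have := mellin_cpow_smul (fun u : ℝ => ((Real.exp (-u) : ℝ) : ℂ)) s a
  simp only [smul_eq_mul, ofReal_exp, ofReal_neg] at this
  rw [this, Gamma_eq_integral hs, GammaIntegral_eq_mellin]
  simp only [ofReal_exp, ofReal_neg]

lemma mellinConvergent_cpow_mul_exp_neg (a : ℂ) {s : ℂ} (hs : 0 < (s + a).re) :
    MellinConvergent (fun u : ℝ => (u : ℂ) ^ a * cexp (-u)) s := by
  have := MellinConvergent.cpow_smul (f := fun u : ℝ => cexp (-u)) (s := s) (a := a)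
  simp only [smul_eq_mul] at this
  refine this.mpr <| (GammaIntegral_convergent hs).congr_fun (fun t _ => ?_) measurableSet_Ioi
  simp [mul_comm]

/-- Mellin inversion applied to `u ↦ u ^ (x - re x) * exp (-u)`, whose Mellin transform is
`s ↦ Γ(s + x - re x)`. -/
lemma integral_cpow_neg_mul_I_mul_Gamma {x : ℂ} (hx : 0 < x.re) {z : ℝ} (hz : 0 < z) :
    ∫ t : ℝ, (z : ℂ) ^ (-(t : ℂ) * I) * Gamma (x + t * I) = 2 * π * (z : ℂ) ^ x * cexp (-z) := by
  set a : ℂ := x - x.re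
  set f : ℝ → ℂ := fun u => (u : ℂ) ^ a * cexp (-u)
  have hshift : ∀ t : ℝ, (x.re : ℂ) + t * I + a = x + t * I := fun t => by ring
  have hmellin : ∀ t : ℝ, mellin f (x.re + t * I) = Gamma (x + t * I) := fun t => by
    rw [mellin_cpow_mul_exp_neg a (by simpa [hshift] using hx), hshift]
  have hinv := mellinInv_mellin_eq x.re f hz
    (mellinConvergent_cpow_mul_exp_neg a (by simpa [a] using hx))
    ((integrable_Gamma_add_mul_I hx).congr (.of_forall fun t => (hmellin t).symm))
    ((continuous_ofReal.continuousAt.cpow continuousAt_const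
      (ofReal_mem_slitPlane.mpr hz)).mul (by fun_prop))
  have hz0 : (z : ℂ) ≠ 0 := ofReal_ne_zero.mpr hz.ne'
  have hsplit : ∀ t : ℝ, (z : ℂ) ^ (-((x.re : ℂ) + t * I)) • mellin f (x.re + t * I)
      = (z : ℂ) ^ (-(x.re : ℂ)) * ((z : ℂ) ^ (-(t : ℂ) * I) * Gamma (x + t * I)) := fun t => by
    rw [smul_eq_mul, hmellin, neg_add, cpow_add _ _ hz0, neg_mul, mul_assoc]
  simp only [mellinInv, hsplit, integral_const_mul, f] at hinv
  rw [real_smul, cpow_neg] at hinv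
  have hzre : (z : ℂ) ^ (x.re : ℂ) ≠ 0 := cpow_ne_zero_iff.mpr (.inl hz0)
  have hzx : (z : ℂ) ^ x = (z : ℂ) ^ (x.re : ℂ) * (z : ℂ) ^ a := by
    rw [← cpow_add _ _ hz0, add_sub_cancel]
  rw [ofReal_div, ofReal_one, one_div, inv_mul_eq_iff_eq_mul₀ (by simp [pi_ne_zero]),
    inv_mul_eq_iff_eq_mul₀ hzre] at hinv
  rw [hzx, hinv]
  push_cast
  ring

lemma integrable_cpow_neg_mul_I_mul_Gamma {x : ℂ} (hx : 0 < x.re) {m : ℝ} (hm : 0 < m) :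
    Integrable fun t : ℝ => (m : ℂ) ^ (-(t : ℂ) * I) * Gamma (x + t * I) :=
  (integrable_Gamma_add_mul_I hx).bdd_mul (c := 1)
    (Continuous.const_cpow (by fun_prop) (.inl (ofReal_ne_zero.mpr hm.ne'))).aestronglyMeasurable
    (.of_forall fun t => by simp [norm_cpow_eq_rpow_re_of_pos hm])

lemma cpow_mul_I_mul_Gamma_sub_mul_I {a : ℂ} (ha : 0 < a.re) {r : ℝ} (hr : 0 < r) (t : ℝ) :
    (r : ℂ) ^ ((t : ℂ) * I) * Gamma (a - t * I)
      = r ^ a * ∫ u : ℝ in Ioi 0, (u : ℂ) ^ (a - t * I - 1) * cexp (-(r * u)) := by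
  rw [integral_cpow_mul_exp_neg_mul_Ioi (by simpa using ha) hr, one_div,
    inv_cpow_ofReal_nonneg hr.le, ← cpow_neg, ← mul_assoc,
    ← cpow_add _ _ (ofReal_ne_zero.mpr hr.ne'), neg_sub, add_sub_cancel]

lemma integral_cpow_neg_mul_I_mul_Gamma_mul_cpow_mul_exp {x a : ℂ} (hx : 0 < x.re) {m r u : ℝ}
    (hm : 0 < m) (hu : 0 < u) :
    ∫ t : ℝ, (m : ℂ) ^ (-(t : ℂ) * I) * Gamma (x + t * I)
        * ((u : ℂ) ^ (a - t * I - 1) * cexp (-(r * u)))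
      = 2 * π * m ^ x * ((u : ℂ) ^ (x + a - 1) * cexp (-((m + r : ℝ) * u))) := by
  have hu0 : (u : ℂ) ≠ 0 := ofReal_ne_zero.mpr hu.ne'
  have hsplit : ∀ t : ℝ, (m : ℂ) ^ (-(t : ℂ) * I) * Gamma (x + t * I)
        * ((u : ℂ) ^ (a - t * I - 1) * cexp (-(r * u)))
      = ((m * u : ℝ) : ℂ) ^ (-(t : ℂ) * I) * Gamma (x + t * I)
        * ((u : ℂ) ^ (a - 1) * cexp (-(r * u))) := fun t => by
    rw [ofReal_mul, mul_cpow_ofReal_nonneg hm.le hu.le,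
      show a - t * I - 1 = -t * I + (a - 1) by ring, cpow_add _ _ hu0]
    ring
  rw [integral_congr_ae (.of_forall hsplit), integral_mul_const,
    integral_cpow_neg_mul_I_mul_Gamma hx (mul_pos hm hu), ofReal_mul,
    mul_cpow_ofReal_nonneg hm.le hu.le, show x + a - 1 = x + (a - 1) by ring,
    cpow_add _ _ hu0, show -(((m + r : ℝ) : ℂ) * u) = -(m * u) + -(r * u) by push_cast; ring,
    Complex.exp_add]
  ring

lemma integrable_mul_cpow_mul_exp_neg_mul {G : ℝ → ℂ} (hG : Integrable G) {a : ℂ}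
    (ha : 0 < a.re) {r : ℝ} (hr : 0 < r) :
    Integrable (fun p : ℝ × ℝ => G p.1 * ((p.2 : ℂ) ^ (a - p.1 * I - 1) * cexp (-(r * p.2))))
      (volume.prod (volume.restrict (Ioi 0))) := by
  have hexp : IntegrableOn (fun u : ℝ => u ^ (a.re - 1) * Real.exp (-(r * u))) (Ioi 0) := by
    simpa using integrableOn_rpow_mul_exp_neg_mul_rpow (p := 1) (by linarith) one_pos hr
  have hmeas : Measurable fun p : ℝ × ℝ => (p.2 : ℂ) ^ (a - p.1 * I - 1) * cexp (-(r * p.2)) := by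
    fun_prop
  refine (hG.norm.mul_prod hexp).mono'
    (hG.aestronglyMeasurable.comp_fst.mul hmeas.aestronglyMeasurable) ?_
  filter_upwards [Measure.quasiMeasurePreserving_snd.ae (ae_restrict_mem measurableSet_Ioi)]
    with p (hp : 0 < p.2)
  rw [norm_mul, norm_mul, norm_cpow_eq_rpow_re_of_pos hp, ← ofReal_mul, ← ofReal_neg,
    norm_exp_ofReal]
  simp

end Complex

theorem stmt0 (x₁ x₂ : ℂ) (hx₁ : 0 < x₁.re) (hx₂ : 0 < x₂.re)
    (m n : ℝ) (hm : 0 < m) (hn : 0 < n) :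
    (1 / ((m : ℂ) ^ x₁ * (n : ℂ) ^ x₂)) *
      ∫ t : ℝ, (m : ℂ) ^ (-(t : ℂ) * Complex.I) * (n : ℂ) ^ ((t : ℂ) * Complex.I) *
        Complex.Gamma (x₁ + t * Complex.I) * Complex.Gamma (x₂ - t * Complex.I)
    = 2 * Real.pi * Complex.Gamma (x₁ + x₂) / ((m + n : ℝ) : ℂ) ^ (x₁ + x₂) := by
  set F : ℝ → ℝ → ℂ := fun t u => (m : ℂ) ^ (-(t : ℂ) * I) * Gamma (x₁ + t * I)
    * ((u : ℂ) ^ (x₂ - t * I - 1) * cexp (-(n * u)))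
  have hF : ∀ t : ℝ, (m : ℂ) ^ (-(t : ℂ) * I) * n ^ ((t : ℂ) * I) * Gamma (x₁ + t * I)
      * Gamma (x₂ - t * I) = n ^ x₂ * ∫ u : ℝ in Ioi 0, F t u := fun t => by
    rw [integral_const_mul, mul_left_comm, ← cpow_mul_I_mul_Gamma_sub_mul_I hx₂ hn]
    ring
  have hm0 : (m : ℂ) ^ x₁ ≠ 0 := cpow_ne_zero_iff.mpr (.inl (ofReal_ne_zero.mpr hm.ne'))
  have hn0 : (n : ℂ) ^ x₂ ≠ 0 := cpow_ne_zero_iff.mpr (.inl (ofReal_ne_zero.mpr hn.ne'))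
  calc _ = 1 / ((m : ℂ) ^ x₁ * n ^ x₂) * (n ^ x₂ * ∫ u : ℝ in Ioi 0, ∫ t, F t u) := by
        rw [integral_congr_ae (.of_forall hF), integral_const_mul, integral_integral_swap
          (integrable_mul_cpow_mul_exp_neg_mul (integrable_cpow_neg_mul_I_mul_Gamma hx₁ hm) hx₂ hn)]
    _ = 1 / ((m : ℂ) ^ x₁ * n ^ x₂) * (n ^ x₂ * (2 * π * m ^ x₁ *
          ∫ u : ℝ in Ioi 0, (u : ℂ) ^ (x₁ + x₂ - 1) * cexp (-((m + n : ℝ) * u)))) := by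
        rw [setIntegral_congr_fun measurableSet_Ioi fun u hu =>
          integral_cpow_neg_mul_I_mul_Gamma_mul_cpow_mul_exp hx₁ hm hu, integral_const_mul]
    _ = _ := by
      rw [integral_cpow_mul_exp_neg_mul_Ioi (by simp only [add_re]; linarith) (by linarith),
        one_div ((m + n : ℝ) : ℂ), inv_cpow_ofReal_nonneg (by linarith)]
      field_simp
end

section
/- Let a, b, c > 0 be real numbers and define h(t) = e^{-at} e^{-b e^{-ct}} for t ∈ ℝ. Then h is a Schwartz function: for all nonnegative integers k and m, the function t ↦ t^m h^{(k)}(t) is bounded on ℝ. -/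
open Real

noncomputable def Fab (b c α : ℝ) : ℝ → ℝ :=
  fun t => Real.exp (-α * t - b * Real.exp (-c * t))

lemma Fab_contDiff (b c α : ℝ) : ContDiff ℝ (⊤ : ℕ∞) (Fab b c α) := by
  apply ContDiff.exp
  exact (contDiff_const.mul contDiff_id).sub
    (contDiff_const.mul ((contDiff_const.mul contDiff_id).exp))

lemma Fab_shift (b c α t : ℝ) :
    Fab b c (α + c) t = Real.exp (-c * t) * Fab b c α t := by
  unfold Fab
  rw [← Real.exp_add]
  ring_nf

lemma Fab_hasDerivAt (b c α t : ℝ) :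
    HasDerivAt (Fab b c α) (-α * Fab b c α t + (b * c) * Fab b c (α + c) t) t := by
  have hg : HasDerivAt (fun t : ℝ => -α * t - b * Real.exp (-c * t))
      (-α - b * (Real.exp (-c * t) * (-c))) t := by
    have h1 : HasDerivAt (fun t : ℝ => -α * t) (-α) t := by
      simpa using (hasDerivAt_id t).const_mul (-α)
    have h2 : HasDerivAt (fun t : ℝ => Real.exp (-c * t)) (Real.exp (-c * t) * (-c)) t := by
      have := ((hasDerivAt_id t).const_mul (-c)).exp
      simpa using this
    simpa using h1.fun_sub (h2.const_mul b)
  have := hg.exp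
  rw [Fab_shift]
  have key : Real.exp (-α * t - b * Real.exp (-c * t)) * (-α - b * (Real.exp (-c * t) * (-c)))
      = -α * Fab b c α t + b * c * (Real.exp (-c * t) * Fab b c α t) := by
    unfold Fab; ring
  rw [key] at this
  exact this

lemma Fab_bound {b c : ℝ} (hb : 0 < b) (hc : 0 < c) {α : ℝ} (hα : 0 < α) (m : ℕ) :
    ∃ C : ℝ, ∀ t : ℝ, |t ^ m * Fab b c α t| ≤ C := by
  set φ : ℝ → ℝ := fun t => t ^ m * Fab b c α t with hφ
  have hcont : Continuous φ := by
    exact (continuous_pow m).mul (Fab_contDiff b c α).continuous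
  have hFpos : ∀ t, 0 < Fab b c α t := fun t => Real.exp_pos _
  -- tendsto at top
  have htop : Filter.Tendsto φ Filter.atTop (nhds 0) := by
    have hbound : ∀ t : ℝ, 0 ≤ t → |φ t| ≤ t ^ m * Real.exp (-(α * t)) := by
      intro t ht
      have h1 : Fab b c α t ≤ Real.exp (-(α * t)) := by
        unfold Fab
        apply Real.exp_le_exp.2
        have : 0 ≤ b * Real.exp (-c * t) := by positivity
        nlinarith
      rw [abs_of_nonneg (mul_nonneg (pow_nonneg ht m) (hFpos t).le)]
      exact mul_le_mul_of_nonneg_left h1 (pow_nonneg ht m)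
    have hmain : Filter.Tendsto (fun t : ℝ => t ^ m * Real.exp (-(α * t)))
        Filter.atTop (nhds 0) := by
      have h2 : Filter.Tendsto (fun t : ℝ => α * t) Filter.atTop Filter.atTop :=
        Filter.tendsto_id.const_mul_atTop hα
      have h3 := (Real.tendsto_pow_mul_exp_neg_atTop_nhds_zero m).comp h2
      have h4 := h3.const_mul ((α ^ m)⁻¹)
      rw [mul_zero] at h4
      apply h4.congr
      intro t
      simp only [Function.comp_apply, mul_pow]
      field_simp
    have : Filter.Tendsto (fun t => |φ t|) Filter.atTop (nhds 0) := by
      apply squeeze_zero' (Filter.Eventually.of_forall fun t => abs_nonneg _)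
        ?_ hmain
      filter_upwards [Filter.eventually_ge_atTop (0 : ℝ)] with t ht
      exact hbound t ht
    exact (tendsto_zero_iff_abs_tendsto_zero φ).2 this
  -- tendsto at bot
  have hbot : Filter.Tendsto φ Filter.atBot (nhds 0) := by
    have key : Filter.Tendsto (fun s : ℝ => φ (-s)) Filter.atTop (nhds 0) := by
      have hbound : ∀ᶠ s : ℝ in Filter.atTop, |φ (-s)| ≤ s ^ m * Real.exp (-s) := by
        filter_upwards [Filter.eventually_ge_atTop (max 1 (2 * (α + 1) / (b * c ^ 2)))]
          with s hs
        have hs1 : (1 : ℝ) ≤ s := le_trans (le_max_left _ _) hs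
        have hs0 : 0 ≤ s := by linarith
        have habs : |φ (-s)| = s ^ m * Fab b c α (-s) := by
          rw [hφ]
          simp only
          rw [abs_mul, abs_of_pos (hFpos _), abs_pow, abs_neg, abs_of_nonneg hs0]
        rw [habs]
        apply mul_le_mul_of_nonneg_left _ (by positivity)
        unfold Fab
        apply Real.exp_le_exp.2
        -- need : -α * (-s) - b * exp (-c * -s) ≤ -s,  i.e. α s - b e^{c s} ≤ -s
        have hexp : (c * s) ^ 2 / 2 ≤ Real.exp (c * s) := by
          have h := Real.quadratic_le_exp_of_nonneg
            (mul_nonneg hc.le hs0 : (0:ℝ) ≤ c * s)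
          nlinarith [mul_nonneg hc.le hs0]
        have hs2 : 2 * (α + 1) / (b * c ^ 2) ≤ s := le_trans (le_max_right _ _) hs
        have hbc : 0 < b * c ^ 2 := by positivity
        have h3 : 2 * (α + 1) ≤ s * (b * c ^ 2) := by
          rw [div_le_iff₀ hbc] at hs2; linarith
        have h4 : (α + 1) * s ≤ b * Real.exp (c * s) := by
          have h5 : b * ((c * s) ^ 2 / 2) ≤ b * Real.exp (c * s) :=
            mul_le_mul_of_nonneg_left hexp hb.le
          have h6 : (α + 1) * s ≤ b * ((c * s) ^ 2 / 2) := by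
            nlinarith [sq_nonneg s, sq_nonneg (s - 1)]
          linarith
        have : Real.exp (-c * -s) = Real.exp (c * s) := by ring_nf
        rw [this]
        nlinarith
      have hmain : Filter.Tendsto (fun s : ℝ => s ^ m * Real.exp (-s))
          Filter.atTop (nhds 0) := tendsto_pow_mul_exp_neg_atTop_nhds_zero m
      have habs : Filter.Tendsto (fun s => |φ (-s)|) Filter.atTop (nhds 0) :=
        squeeze_zero' (Filter.Eventually.of_forall fun t => abs_nonneg _) hbound hmain
      exact (tendsto_zero_iff_abs_tendsto_zero _).2 habs
    have : Filter.Tendsto (fun s : ℝ => -s) Filter.atBot Filter.atTop :=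
      Filter.tendsto_neg_atBot_atTop
    have h2 := key.comp this
    apply h2.congr
    intro s
    simp [Function.comp]
  -- combine into a bound
  obtain ⟨T, hT⟩ := (Filter.eventually_atTop).1
    (htop.eventually (Metric.ball_mem_nhds (0 : ℝ) one_pos))
  obtain ⟨S, hS⟩ := (Filter.eventually_atBot).1
    (hbot.eventually (Metric.ball_mem_nhds (0 : ℝ) one_pos))
  obtain ⟨C₀, hC₀⟩ := (isCompact_Icc (a := S) (b := T)).exists_bound_of_continuousOn
    hcont.continuousOn
  refine ⟨max 1 C₀, fun t => ?_⟩
  rcases le_total t S with h1 | h1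
  · have := hS t h1
    simp only [Metric.mem_ball, Real.dist_eq, sub_zero] at this
    exact le_trans this.le (le_max_left _ _)
  rcases le_total T t with h2 | h2
  · have := hT t h2
    simp only [Metric.mem_ball, Real.dist_eq, sub_zero] at this
    exact le_trans this.le (le_max_left _ _)
  · have := hC₀ t ⟨h1, h2⟩
    simp only [Real.norm_eq_abs] at this
    exact le_trans this (le_max_right _ _)

theorem stmt2 (a b c : ℝ) (ha : 0 < a) (hb : 0 < b) (hc : 0 < c)
    (h : ℝ → ℝ) (hdef : ∀ t, h t = Real.exp (-a * t) * Real.exp (-b * Real.exp (-c * t))) :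
    ContDiff ℝ (⊤ : ℕ∞) h ∧
      ∀ k m : ℕ, ∃ C : ℝ, ∀ t : ℝ, |t ^ m * iteratedDeriv k h t| ≤ C := by
  have hF : h = Fab b c a := by
    funext t
    rw [hdef]
    unfold Fab
    rw [← Real.exp_add]
    ring_nf
  have rep : ∀ k : ℕ, ∃ (n : ℕ) (g cs : Fin n → ℝ), (∀ i, 0 < g i) ∧
      ∀ t, iteratedDeriv k h t = ∑ i, cs i * Fab b c (g i) t := by
    intro k
    induction k with
    | zero =>
      refine ⟨1, fun _ => a, fun _ => 1, fun _ => ha, fun t => ?_⟩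
      simp [iteratedDeriv_zero, hF]
    | succ k ih =>
      obtain ⟨n, g, cs, hg, hrep⟩ := ih
      refine ⟨n + n, Fin.append g (fun i => g i + c),
        Fin.append (fun i => -(g i) * cs i) (fun i => b * c * cs i), ?_, ?_⟩
      · intro i
        refine Fin.addCases (fun j => ?_) (fun j => ?_) i <;>
          simp only [Fin.append_left, Fin.append_right]
        · exact hg j
        · have := hg j; linarith
      · intro t
        rw [iteratedDeriv_succ]
        have heq : iteratedDeriv k h = fun t => ∑ i, cs i * Fab b c (g i) t :=
          funext hrep
        rw [heq]
        have hderiv : HasDerivAt (fun t => ∑ i, cs i * Fab b c (g i) t)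
            (∑ i, cs i * (-(g i) * Fab b c (g i) t + (b * c) * Fab b c (g i + c) t)) t := by
          apply HasDerivAt.fun_sum
          intro i _
          exact (Fab_hasDerivAt b c (g i) t).const_mul (cs i)
        rw [hderiv.deriv]
        rw [Fin.sum_univ_add]
        simp only [Fin.append_left, Fin.append_right]
        rw [← Finset.sum_add_distrib]
        apply Finset.sum_congr rfl
        intro i _
        ring
  constructor
  · rw [hF]; exact Fab_contDiff b c a
  · intro k m
    obtain ⟨n, g, cs, hg, hrep⟩ := rep k
    have hbd : ∀ i : Fin n, ∃ C : ℝ, ∀ t, |t ^ m * Fab b c (g i) t| ≤ C :=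
      fun i => Fab_bound hb hc (hg i) m
    choose C hC using hbd
    refine ⟨∑ i, |cs i| * C i, fun t => ?_⟩
    rw [hrep t, Finset.mul_sum]
    calc |∑ i, t ^ m * (cs i * Fab b c (g i) t)|
        ≤ ∑ i, |t ^ m * (cs i * Fab b c (g i) t)| := Finset.abs_sum_le_sum_abs _ _
      _ ≤ ∑ i, |cs i| * C i := by
          apply Finset.sum_le_sum
          intro i _
          have : |t ^ m * (cs i * Fab b c (g i) t)| = |cs i| * |t ^ m * Fab b c (g i) t| := by
            rw [← abs_mul]; ring_nf
          rw [this]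
          exact mul_le_mul_of_nonneg_left (hC i t) (abs_nonneg _)
end

section
/- Let x > 0 be real and a > 0. Then |Γ(x + it)| decays faster than any polynomial as |t| → ∞; specifically, for every positive integer m there exists C > 0 such that |Γ(x + it)| ≤ C |t|^{-m} for all |t| ≥ 1. -/
/-!
Iterating `Γ(z + 1) = z Γ(z)` gives `Γ(z + m) = z (z + 1) ⋯ (z + m - 1) Γ(z)`, and each factor has
modulus at least `|Im z|`. On the other hand `|Γ(z + m)| ≤ Γ(Re z + m)` by the triangle inequality
in Euler's integral, so `|t| ^ m |Γ(x + it)| ≤ Γ(x + m)`.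
-/

open Complex Real

namespace Complex

lemma norm_Gamma_le_Gamma_re_s10 {z : ℂ} (hz : 0 < z.re) : ‖Gamma z‖ ≤ Real.Gamma z.re := by
  rw [Gamma_eq_integral hz, Real.Gamma_eq_integral hz, GammaIntegral]
  refine (MeasureTheory.norm_integral_le_integral_norm _).trans_eq ?_
  refine MeasureTheory.setIntegral_congr_fun measurableSet_Ioi fun t ht => ?_
  rw [norm_mul, norm_cpow_eq_rpow_re_of_pos ht, norm_real, Real.norm_of_nonneg (exp_pos _).le,
    sub_re, one_re]

lemma Gamma_add_nat_eq_ascPochhammer_eval_mul {z : ℂ} (hz : ∀ k : ℕ, z ≠ -k) (n : ℕ) :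
    Gamma (z + n) = (ascPochhammer ℂ n).eval z * Gamma z := by
  rw [← Gamma_add_nat_div_Gamma_eq z hz, div_mul_cancel₀ _ (Gamma_ne_zero hz)]

lemma abs_im_pow_le_norm_ascPochhammer_eval (z : ℂ) (n : ℕ) :
    |z.im| ^ n ≤ ‖(ascPochhammer ℂ n).eval z‖ := by
  induction n with
  | zero => simp
  | succ n ih =>
    rw [ascPochhammer_succ_eval, norm_mul, pow_succ]
    have h_im : |z.im| ≤ ‖z + n‖ := by
      simpa using abs_im_le_norm (z + n)
    gcongr

lemma abs_im_pow_mul_norm_Gamma_le {z : ℂ} (hz : 0 < z.re) (n : ℕ) :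
    |z.im| ^ n * ‖Gamma z‖ ≤ Real.Gamma (z.re + n) := by
  have hz' : ∀ k : ℕ, z ≠ -k := by
    rintro k rfl
    simp at hz
    exact (Nat.cast_nonneg k).not_gt hz
  calc |z.im| ^ n * ‖Gamma z‖ ≤ ‖(ascPochhammer ℂ n).eval z‖ * ‖Gamma z‖ := by
        gcongr
        exact abs_im_pow_le_norm_ascPochhammer_eval z n
    _ = ‖Gamma (z + n)‖ := by rw [Gamma_add_nat_eq_ascPochhammer_eval_mul hz' n, norm_mul]
    _ ≤ Real.Gamma (z + n).re := norm_Gamma_le_Gamma_re_s10 (by simp; positivity)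
    _ = Real.Gamma (z.re + n) := by simp

end Complex

theorem stmt10_general (x : ℝ) (hx : 0 < x) (m : ℕ) :
    ∃ C : ℝ, 0 < C ∧ ∀ t : ℝ, 1 ≤ |t| →
      ‖Complex.Gamma ((x : ℂ) + t * Complex.I)‖ ≤ C * |t| ^ (-(m : ℝ)) := by
  refine ⟨Real.Gamma (x + m), Real.Gamma_pos_of_pos (by positivity), fun t ht => ?_⟩
  have key := abs_im_pow_mul_norm_Gamma_le (z := x + t * I) (by simpa using hx) m
  rw [rpow_neg (abs_nonneg t), rpow_natCast, ← div_eq_mul_inv,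
    le_div_iff₀ (by positivity), mul_comm]
  simpa using key

theorem stmt10 (x : ℝ) (hx : 0 < x) (m : ℕ) (hm : 0 < m) :
    ∃ C : ℝ, 0 < C ∧ ∀ t : ℝ, 1 ≤ |t| →
      ‖Complex.Gamma ((x : ℂ) + t * Complex.I)‖ ≤ C * |t| ^ (-(m : ℝ)) :=
  stmt10_general x hx m
end
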